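/- Let u : ℝ → H be twice continuously differentiable with u(t) ∈ D(h) for all t, solving the abstract Klein–Gordon equation u''(t) = 2 i k u'(t) − h u(t). Then the charge Q(t) := (k u(t) | u(t)) − Im( ( u(t) | u'(t) ) ) is constant in t. -/

import Mathlib

/-!
Differentiating the charge, the first term contributes `2 Re (u|ku')` because `k` is symmetric,
and the second contributes `Im (u|u'')` because `(u'|u')` is real. Substituting the equation,
`Im (u|2iku') = 2 Re (u|ku')` cancels the first contribution, while `Im (u|hu) = 0` because `h`
is symmetric. So the charge has zero derivative everywhere.
-/

open Complex

noncomputable section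

variable {H : Type*} [NormedAddCommGroup H] [InnerProductSpace ℂ H] [CompleteSpace H]

open scoped InnerProductSpace

theorem LinearPMap.IsFormalAdjoint.im_inner_apply_self {𝕜 E : Type*} [RCLike 𝕜]
    [NormedAddCommGroup E] [InnerProductSpace 𝕜 E] {A : E →ₗ.[𝕜] E}
    (hA : A.IsFormalAdjoint A) (x : A.domain) : RCLike.im ⟪(x : E), A x⟫_𝕜 = 0 := by
  rw [← RCLike.conj_eq_iff_im, inner_conj_symm, hA x x]

theorem IsSelfAdjoint.isFormalAdjoint_self {𝕜 E : Type*} [RCLike 𝕜] [NormedAddCommGroup E]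
    [InnerProductSpace 𝕜 E] [CompleteSpace E] {A : E →ₗ.[𝕜] E} (hA : IsSelfAdjoint A) :
    A.IsFormalAdjoint A := by
  simpa only [LinearPMap.isSelfAdjoint_def.mp hA] using
    LinearPMap.adjoint_isFormalAdjoint hA.dense_domain

section

variable {E : Type*} [NormedAddCommGroup E] [InnerProductSpace ℂ E]

theorem HasDerivAt.re_inner_apply_self {k : E →L[ℂ] E} (hk : (k : E →ₗ[ℂ] E).IsSymmetric)
    {u : ℝ → E} {u' : E} {t : ℝ} (hu : HasDerivAt u u' t) :
    HasDerivAt (fun s => (⟪k (u s), u s⟫_ℂ).re) (2 * (⟪u t, k u'⟫_ℂ).re) t := by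
  have hku : HasDerivAt (fun s => k (u s)) (k u') t :=
    (k.restrictScalars ℝ).hasFDerivAt.comp_hasDerivAt t hu
  refine (reCLM.hasFDerivAt.comp_hasDerivAt t (hku.inner ℂ hu)).congr_deriv ?_
  have hsymm : ⟪k (u t), u'⟫_ℂ = ⟪u t, k u'⟫_ℂ := hk (u t) u'
  rw [reCLM_apply, add_re, hsymm, ← inner_conj_symm (k u') (u t), conj_re, two_mul]

theorem HasDerivAt.im_inner {u v : ℝ → E} {w : E} {t : ℝ} (hu : HasDerivAt u (v t) t)
    (hv : HasDerivAt v w t) :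
    HasDerivAt (fun s => (⟪u s, v s⟫_ℂ).im) (⟪u t, w⟫_ℂ).im t := by
  have hvv : (⟪v t, v t⟫_ℂ).im = 0 := inner_self_im (𝕜 := ℂ) (v t)
  refine (imCLM.hasFDerivAt.comp_hasDerivAt t (hu.inner ℂ hv)).congr_deriv ?_
  rw [imCLM_apply, add_im, hvv, add_zero]

def kleinGordonCharge (k : E →L[ℂ] E) (u : ℝ → E) (t : ℝ) : ℝ :=
  (⟪k (u t), u t⟫_ℂ).re - (⟪u t, deriv u t⟫_ℂ).im

theorem hasDerivAt_kleinGordonCharge {h : E →ₗ.[ℂ] E} (hh : h.IsFormalAdjoint h)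
    {k : E →L[ℂ] E} (hk : (k : E →ₗ[ℂ] E).IsSymmetric) {u : ℝ → E} {t : ℝ}
    (hu : DifferentiableAt ℝ u t) (hu' : DifferentiableAt ℝ (deriv u) t) (ht : u t ∈ h.domain)
    (hode : deriv (deriv u) t = (2 * I) • k (deriv u t) - h ⟨u t, ht⟩) :
    HasDerivAt (kleinGordonCharge k u) 0 t := by
  have hQ := (hu.hasDerivAt.re_inner_apply_self hk).sub (hu.hasDerivAt.im_inner hu'.hasDerivAt)
  refine hQ.congr_deriv ?_
  have hhu : (⟪u t, h ⟨u t, ht⟩⟫_ℂ).im = 0 := hh.im_inner_apply_self ⟨u t, ht⟩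
  rw [hode, inner_sub_right, inner_smul_right, sub_im, hhu, sub_zero, mul_im]
  simp

end

/-- For a solution of `u'' = 2ik u' - h u`, the charge
`Q(t) = (ku|u) - Im (u|u')` is conserved. -/
theorem charge_conserved
    (h : H →ₗ.[ℂ] H) (hsa : IsSelfAdjoint h)
    (k : H →L[ℂ] H) (hk : IsSelfAdjoint k)
    (u : ℝ → H) (hreg : ContDiff ℝ 2 u)
    (hdom : ∀ t : ℝ, u t ∈ h.domain)
    (hode : ∀ t : ℝ,
      deriv (deriv u) t = (2 * Complex.I) • k (deriv u t) - h ⟨u t, hdom t⟩) :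
    ∀ s t : ℝ,
      (inner ℂ (k (u s)) (u s) : ℂ).re - (inner ℂ (u s) (deriv u s) : ℂ).im
        = (inner ℂ (k (u t)) (u t) : ℂ).re - (inner ℂ (u t) (deriv u t) : ℂ).im := by
  have hQ (t : ℝ) : HasDerivAt (kleinGordonCharge k u) 0 t :=
    hasDerivAt_kleinGordonCharge hsa.isFormalAdjoint_self hk.isSymmetric
      (hreg.differentiable two_ne_zero t) (hreg.differentiable_deriv_two t) (hdom t) (hode t)
  exact is_const_of_deriv_eq_zero (fun t => (hQ t).differentiableAt) (fun t => (hQ t).deriv)
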